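/- arXiv:2009.13206 — 3 statements merged into one kernel-verified Lean document; each statement's English description precedes it below -/
import Mathlib

section
/- Let q : (K,G) → (L,G) be an open extension of topological dynamical systems and let μ be a relatively invariant measure for q. Then μ is invariant under the whole uniform enveloping semigroupoid: for every θ ∈ E_u(q) and every f ∈ C(K,ℂ) one has ∫_{K_{s(θ)}} f(θ(x)) dμ_{s(θ)}(x) = ∫_K f dμ_{r(θ)}, where μ_{s(θ)} is regarded as a probability measure on the fiber K_{s(θ)} (which carries its full mass since q_*μ_{s(θ)} = δ_{s(θ)}). -/
/-!
The fiber maps `θ` that carry `μ_{s(θ)}` to `μ_{r(θ)}` form a closed subsemigroupoid containing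
the transition maps, hence contain `E_u(q)`. Transition maps qualify by `g_*μ_l = μ_{g•l}`. For a
composite `η ∘ θ`, extend `f ∘ η` from the closed fiber `K_{s(η)}` to all of `K` (Tietze) and
apply the identity first for `θ`, then for `η`. Closedness holds because both sides depend
continuously on `θ`: near `θ`, `f ∘ θ'` is uniformly close on its fiber to a fixed Tietze
extension `F` of `f ∘ θ` (compactness of `K`), and `∫ F dμ_{s(θ')}` is continuous in `θ'` since
`s` and `μ` are.
-/

open Filter Topology Set Function MeasureTheory

/-- A continuous fiber map between the fibers of the bundles `p : X → L` and `q : Y → L'`: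
an element of `C_p^q(X,Y)` with source `src` and range `rng`. -/
structure FiberMap {X L Y L' : Type} [TopologicalSpace X] [TopologicalSpace Y]
    (p : X → L) (q : Y → L') where
  src : L
  rng : L'
  toFun : {x : X // p x = src} → Y
  maps_to : ∀ x, q (toFun x) = rng
  continuous_toFun : Continuous toFun

/-- The compact-open topology on `C_p^q(X,Y)`, generated by the sets
`W(C,O) = {θ | θ(C ∩ X_{s(θ)}) ⊆ O}` for `C ⊆ X` compact and `O ⊆ Y` open. -/
def fiberCO {X L Y L' : Type} [TopologicalSpace X] [TopologicalSpace Y]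
    (p : X → L) (q : Y → L') : TopologicalSpace (FiberMap p q) :=
  TopologicalSpace.generateFrom
    {W | ∃ (C : Set X) (O : Set Y), IsCompact C ∧ IsOpen O ∧
      W = {θ : FiberMap p q | ∀ x : {x : X // p x = θ.src}, (x : X) ∈ C → θ.toFun x ∈ O}}

instance fiberMapTopology {X L Y L' : Type} [TopologicalSpace X] [TopologicalSpace Y]
    (p : X → L) (q : Y → L') : TopologicalSpace (FiberMap p q) :=
  fiberCO p q

/-- Composition `η ∘ θ` of continuous fiber maps in `C_q^q(K,K)` with `r(θ) = s(η)`. -/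
def FiberMap.comp {K L : Type} [TopologicalSpace K] {q : K → L}
    (η θ : FiberMap q q) (h : θ.rng = η.src) : FiberMap q q where
  src := θ.src
  rng := η.rng
  toFun x := η.toFun ⟨θ.toFun x, (θ.maps_to x).trans h⟩
  maps_to x := η.maps_to _
  continuous_toFun := η.continuous_toFun.comp
    (θ.continuous_toFun.subtype_mk fun x => (θ.maps_to x).trans h)

/-- A set of fiber maps is a subsemigroupoid if it is closed under composition of
composable elements. -/
def IsSubsemigroupoid {K L : Type} [TopologicalSpace K] {q : K → L}
    (S : Set (FiberMap q q)) : Prop :=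
  ∀ θ ∈ S, ∀ η ∈ S, ∀ h : θ.rng = η.src, FiberMap.comp η θ h ∈ S

/-- The set `S(q)` of transition maps `φ_g|_{K_l} : K_l → K_{g•l}`. -/
def transitionSet (G : Type) {K L : Type} [Group G] [TopologicalSpace K]
    [MulAction G K] [MulAction G L] (q : K → L) : Set (FiberMap q q) :=
  {θ | ∃ g : G, θ.rng = g • θ.src ∧ ∀ x : {x : K // q x = θ.src}, θ.toFun x = g • (x : K)}

/-- The uniform enveloping semigroupoid `E_u(q)`: the smallest subsemigroupoid of
`C_q^q(K,K)` containing `S(q)` that is closed in the compact-open topology. -/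
def uniformEnveloping (G : Type) {K L : Type} [Group G] [TopologicalSpace K]
    [MulAction G K] [MulAction G L] (q : K → L) : Set (FiberMap q q) :=
  ⋂₀ {S : Set (FiberMap q q) | transitionSet G q ⊆ S ∧ IsSubsemigroupoid S ∧ IsClosed S}

/-- A relatively invariant measure for the extension `q : (K,G) → (L,G)`: a
weak*-continuous family of Radon (regular Borel) probability measures `μ_l` on `K` with
`q_*μ_l = δ_l` and `g_*μ_l = μ_{g•l}` for all `g ∈ G`, `l ∈ L`. -/
def IsRIM (G : Type) {K L : Type} [Group G] [TopologicalSpace K] [MeasurableSpace K]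
    [OpensMeasurableSpace K] [TopologicalSpace L] [MeasurableSpace L]
    [MulAction G K] [MulAction G L] (q : K → L)
    (μ : L → MeasureTheory.ProbabilityMeasure K) : Prop :=
  Continuous μ ∧
  (∀ l : L, ((μ l : MeasureTheory.Measure K)).Regular) ∧
  (∀ l : L, (μ l : MeasureTheory.Measure K).map q = MeasureTheory.Measure.dirac l) ∧
  (∀ (g : G) (l : L),
    (μ l : MeasureTheory.Measure K).map (fun x => g • x) = (μ (g • l) : MeasureTheory.Measure K))

/-- A relatively invariant measure is fully supported if `supp μ_l = K_l` for every `l`,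
i.e. every open set meeting the fiber `K_l` has positive `μ_l`-measure. -/
def IsFullySupportedRIM {K L : Type} [TopologicalSpace K] [MeasurableSpace K]
    (q : K → L) (μ : L → MeasureTheory.ProbabilityMeasure K) : Prop :=
  ∀ l : L, ∀ U : Set K, IsOpen U → (U ∩ q ⁻¹' {l}).Nonempty →
    (μ l : MeasureTheory.Measure K) U ≠ 0

namespace FiberMap

section Topology

variable {X L Y L' : Type} [TopologicalSpace X] [TopologicalSpace Y] {p : X → L} {q : Y → L'}

lemma isOpen_setOf_mapsTo {C : Set X} {O : Set Y} (hC : IsCompact C) (hO : IsOpen O) :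
    IsOpen {θ : FiberMap p q | ∀ x : {x : X // p x = θ.src}, (x : X) ∈ C → θ.toFun x ∈ O} :=
  TopologicalSpace.isOpen_generateFrom_of_mem ⟨C, O, hC, hO, rfl⟩

variable [CompactSpace X]

lemma continuous_src [TopologicalSpace L] (hp : Continuous p) (hps : Surjective p) :
    Continuous (src : FiberMap p q → L) := by
  refine continuous_def.2 fun U hU => ?_
  have hpre : src ⁻¹' U = {θ : FiberMap p q | ∀ x : {x : X // p x = θ.src},
      (x : X) ∈ p ⁻¹' Uᶜ → θ.toFun x ∈ (∅ : Set Y)} := by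
    ext θ
    obtain ⟨x, hx⟩ := hps θ.src
    simp only [mem_preimage, mem_ofPred_eq, mem_compl_iff, mem_empty_iff_false, imp_false,
      not_not, Subtype.forall]
    exact ⟨fun hθ y hy => hy ▸ hθ, fun h => hx ▸ h x hx⟩
  rw [hpre]
  exact isOpen_setOf_mapsTo (hU.isClosed_compl.preimage hp).isCompact isOpen_empty

lemma continuous_rng [TopologicalSpace L'] (hq : Continuous q) (hps : Surjective p) :
    Continuous (rng : FiberMap p q → L') := by
  refine continuous_def.2 fun V hV => ?_
  have hpre : rng ⁻¹' V = {θ : FiberMap p q | ∀ x : {x : X // p x = θ.src},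
      (x : X) ∈ univ → θ.toFun x ∈ q ⁻¹' V} := by
    ext θ
    obtain ⟨x, hx⟩ := hps θ.src
    simp only [mem_preimage, mem_ofPred_eq, mem_univ, forall_const, maps_to]
    exact ⟨fun hθ _ => hθ, fun h => h ⟨x, hx⟩⟩
  rw [hpre]
  exact isOpen_setOf_mapsTo isCompact_univ (hV.preimage hq)

variable [T2Space X] [TopologicalSpace L] [T2Space L] {E : Type} [PseudoMetricSpace E]

lemma eventually_forall_dist_lt (hp : Continuous p) (hps : Surjective p) {f : Y → E}
    (hf : Continuous f) {F : X → E} (hF : Continuous F) {θ : FiberMap p q}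
    (hθF : ∀ x : {x : X // p x = θ.src}, F x = f (θ.toFun x)) {ε : ℝ} (hε : 0 < ε) :
    ∀ᶠ θ' in 𝓝 θ, ∀ x : {x : X // p x = θ'.src}, dist (f (θ'.toFun x)) (F x) < ε := by
  suffices h : ∀ y : X, ∀ᶠ z : FiberMap p q × X in 𝓝 (θ, y),
      ∀ h : p z.2 = z.1.src, dist (f (z.1.toFun ⟨z.2, h⟩)) (F z.2) < ε from
    (isCompact_univ.eventually_forall_of_forall_eventually
      (P := fun θ' y => ∀ h : p y = θ'.src, dist (f (θ'.toFun ⟨y, h⟩)) (F y) < ε)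
      fun y _ => h y).mono fun θ' h x => h x.1 trivial x.2
  intro y
  by_cases hy : p y = θ.src
  · set a : {x : X // p x = θ.src} := ⟨y, hy⟩
    set O := f ⁻¹' Metric.ball (f (θ.toFun a)) (ε / 2)
    have hO : IsOpen O := Metric.isOpen_ball.preimage hf
    obtain ⟨U, hU, hUO⟩ := isOpen_induced_iff.mp (hO.preimage θ.continuous_toFun)
    have hyU : y ∈ U := by
      change a ∈ Subtype.val ⁻¹' U
      rw [hUO]
      exact Metric.mem_ball_self (half_pos hε)
    have hyF : y ∈ F ⁻¹' Metric.ball (F y) (ε / 2) := Metric.mem_ball_self (half_pos hε)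
    obtain ⟨C, hC, hyC, hCU⟩ := exists_compact_subset
      (hU.inter (Metric.isOpen_ball.preimage hF)) ⟨hyU, hyF⟩
    have hθC : θ ∈ {θ' : FiberMap p q | ∀ x : {x : X // p x = θ'.src}, (x : X) ∈ C →
        θ'.toFun x ∈ O} := fun x hx => by
      rw [← mem_preimage, ← hUO]
      exact (hCU hx).1
    filter_upwards [prod_mem_nhds ((isOpen_setOf_mapsTo hC hO).mem_nhds hθC)
      (mem_interior_iff_mem_nhds.1 hyC)] with ⟨θ', y'⟩ ⟨hθ', hy'⟩ h
    have hf' : dist (f (θ'.toFun ⟨y', h⟩)) (F y) < ε / 2 := hθF a ▸ hθ' ⟨y', h⟩ hy'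
    have hF' : dist (F y') (F y) < ε / 2 := (hCU hy').2
    linarith [dist_triangle_right (f (θ'.toFun ⟨y', h⟩)) (F y') (F y)]
  · filter_upwards [(isOpen_ne_fun (hp.comp continuous_snd)
      ((continuous_src hp hps).comp continuous_fst)).mem_nhds hy] with z hz h
    exact absurd h hz

end Topology

end FiberMap

section FiberMeasure

variable {X L : Type} [MeasurableSpace X] [MeasurableSpace L] [MeasurableSingletonClass L]
  {p : X → L} {l : L} {ν : Measure X}

lemma measurableEmbedding_subtypeVal_fiber (hp : Measurable p) (l : L) :
    MeasurableEmbedding (Subtype.val : {x : X // p x = l} → X) :=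
  MeasurableEmbedding.subtype_coe (hp (measurableSet_singleton l))

lemma map_subtypeVal_comap_of_map_eq_dirac (hp : Measurable p) (hν : ν.map p = Measure.dirac l) :
    (ν.comap (Subtype.val : {x : X // p x = l} → X)).map Subtype.val = ν := by
  have hae : ∀ᵐ x ∂ν, p x = l := by
    have : ∀ᵐ y ∂(ν.map p), y = l := by rw [hν, ae_dirac_eq]; exact rfl
    exact (ae_map_iff hp.aemeasurable (measurableSet_singleton l)).1 this
  rw [(measurableEmbedding_subtypeVal_fiber hp l).map_comap, Subtype.range_coe_subtype]
  exact Measure.restrict_eq_self_of_ae_mem hae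

lemma isProbabilityMeasure_comap_subtypeVal [IsProbabilityMeasure ν] (hp : Measurable p)
    (hν : ν.map p = Measure.dirac l) :
    IsProbabilityMeasure (ν.comap (Subtype.val : {x : X // p x = l} → X)) := by
  have : IsProbabilityMeasure
      ((ν.comap (Subtype.val : {x : X // p x = l} → X)).map Subtype.val) := by
    rwa [map_subtypeVal_comap_of_map_eq_dirac hp hν]
  exact Measure.isProbabilityMeasure_of_map Subtype.val

lemma integral_comap_subtypeVal_of_map_eq_dirac {E : Type} [NormedAddCommGroup E]
    [NormedSpace ℝ E] (hp : Measurable p) (hν : ν.map p = Measure.dirac l) (g : X → E) :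
    ∫ x : {x : X // p x = l}, g x ∂(ν.comap Subtype.val) = ∫ x, g x ∂ν := by
  conv_rhs => rw [← map_subtypeVal_comap_of_map_eq_dirac hp hν]
  exact ((measurableEmbedding_subtypeVal_fiber hp l).integral_map g).symm

end FiberMeasure

lemma ContinuousMap.exists_extension_of_fiber {X L : Type} [TopologicalSpace X] [NormalSpace X]
    [TopologicalSpace L] [T1Space L] {p : X → L} (hp : Continuous p) {l : L}
    {g : {x : X // p x = l} → ℂ} (hg : Continuous g) :
    ∃ F : C(X, ℂ), ∀ x : {x : X // p x = l}, F x = g x := by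
  obtain ⟨F, hF⟩ := ContinuousMap.exists_extension'
    (isClosed_singleton.preimage hp).isClosedEmbedding_subtypeVal ⟨g, hg⟩
  exact ⟨F, congrFun hF⟩

lemma MeasureTheory.ProbabilityMeasure.continuous_integral_complex {X : Type}
    [TopologicalSpace X] [CompactSpace X] [MeasurableSpace X] [OpensMeasurableSpace X]
    (f : C(X, ℂ)) :
    Continuous fun ν : ProbabilityMeasure X => ∫ x, f x ∂(ν : Measure X) :=
  continuous_iff_continuousAt.2 fun _ =>
    (ProbabilityMeasure.tendsto_iff_forall_integral_rclike_tendsto ℂ).1 tendsto_id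
      (BoundedContinuousFunction.mkOfCompact f)

namespace FiberMap

section FiberIntegral

variable {X L Y L' : Type} [TopologicalSpace X] [MeasurableSpace X] [TopologicalSpace Y]
  {p : X → L} {q : Y → L'}

/-- `∫_{X_{s(θ)}} f ∘ θ dμ_{s(θ)}`, where `μ_{s(θ)}` is seen on the fiber through `comap`. -/
noncomputable def fiberIntegral (μ : L → ProbabilityMeasure X) (f : Y → ℂ) (θ : FiberMap p q) :
    ℂ :=
  ∫ x : {x : X // p x = θ.src}, f (θ.toFun x) ∂((μ θ.src : Measure X).comap Subtype.val)

variable {μ : L → ProbabilityMeasure X}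

lemma fiberIntegral_eq_integral [MeasurableSpace L] [MeasurableSingletonClass L]
    (hp : Measurable p) (hd : ∀ l, (μ l : Measure X).map p = Measure.dirac l) {f : Y → ℂ}
    {θ : FiberMap p q} {F : X → ℂ} (hF : ∀ x : {x : X // p x = θ.src}, F x = f (θ.toFun x)) :
    fiberIntegral μ f θ = ∫ x, F x ∂(μ θ.src : Measure X) := by
  rw [← integral_comap_subtypeVal_of_map_eq_dirac hp (hd θ.src)]
  simp only [fiberIntegral, hF]

variable [OpensMeasurableSpace X] [TopologicalSpace L] [MeasurableSpace L] [BorelSpace L]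
  [CompactSpace X]

lemma dist_fiberIntegral_integral_le [T1Space L] (hp : Continuous p)
    (hd : ∀ l, (μ l : Measure X).map p = Measure.dirac l) {f : Y → ℂ} (hf : Continuous f)
    {θ : FiberMap p q} {F : X → ℂ} (hF : Continuous F) {ε : ℝ}
    (hε : ∀ x, dist (f (θ.toFun x)) (F x) ≤ ε) :
    dist (fiberIntegral μ f θ) (∫ x, F x ∂(μ θ.src : Measure X)) ≤ ε := by
  have := isProbabilityMeasure_comap_subtypeVal hp.measurable (hd θ.src)
  have : CompactSpace {x : X // p x = θ.src} :=
    isCompact_iff_compactSpace.mp (isClosed_singleton.preimage hp).isCompact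
  have hfθ : Integrable (fun x : {x : X // p x = θ.src} => f (θ.toFun x))
      ((μ θ.src : Measure X).comap Subtype.val) :=
    (hf.comp θ.continuous_toFun).integrable_of_hasCompactSupport
      (HasCompactSupport.of_compactSpace _)
  have hFθ : Integrable (fun x : {x : X // p x = θ.src} => F x)
      ((μ θ.src : Measure X).comap Subtype.val) :=
    (hF.comp continuous_subtype_val).integrable_of_hasCompactSupport
      (HasCompactSupport.of_compactSpace _)
  rw [← integral_comap_subtypeVal_of_map_eq_dirac hp.measurable (hd θ.src), dist_eq_norm,
    fiberIntegral, ← integral_sub hfθ hFθ]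
  simpa using norm_integral_le_of_norm_le_const (μ := (μ θ.src : Measure X).comap Subtype.val)
    (Eventually.of_forall fun x => (dist_eq_norm _ _).symm.trans_le (hε x))

lemma continuous_fiberIntegral [T2Space X] [T2Space L] (hp : Continuous p) (hps : Surjective p)
    (hμ : Continuous μ) (hd : ∀ l, (μ l : Measure X).map p = Measure.dirac l) {f : Y → ℂ}
    (hf : Continuous f) : Continuous (fiberIntegral μ f : FiberMap p q → ℂ) := by
  refine continuous_iff_continuousAt.2 fun θ => Metric.tendsto_nhds.2 fun ε hε => ?_
  obtain ⟨F, hF⟩ := ContinuousMap.exists_extension_of_fiber hp (hf.comp θ.continuous_toFun)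
  have hFθ : Tendsto (fun θ' : FiberMap p q => ∫ x, F x ∂(μ θ'.src : Measure X)) (𝓝 θ)
      (𝓝 (fiberIntegral μ f θ)) := by
    rw [fiberIntegral_eq_integral hp.measurable hd hF]
    exact ((ProbabilityMeasure.continuous_integral_complex F).comp
      (hμ.comp (continuous_src hp hps))).tendsto θ
  filter_upwards [eventually_forall_dist_lt hp hps hf F.continuous hF (half_pos hε),
    Metric.tendsto_nhds.1 hFθ _ (half_pos hε)] with θ' hθ' hFθ'
  linarith [dist_triangle (fiberIntegral μ f θ') (∫ x, F x ∂(μ θ'.src : Measure X))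
    (fiberIntegral μ f θ), dist_fiberIntegral_integral_le hp hd hf F.continuous
    fun x => (hθ' x).le]

end FiberIntegral

section Invariance

variable {K L : Type} [TopologicalSpace K] [MeasurableSpace K] [MeasurableSpace L] {q : K → L}
  {μ : L → ProbabilityMeasure K}

def invariantFiberMaps (q : K → L) (μ : L → ProbabilityMeasure K) : Set (FiberMap q q) :=
  {θ | ∀ f : C(K, ℂ), fiberIntegral μ f θ = ∫ x, f x ∂(μ θ.rng : Measure K)}

lemma transitionSet_subset_invariantFiberMaps (G : Type) [Group G] [MulAction G K]
    [MulAction G L] [ContinuousConstSMul G K] [BorelSpace K]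
    [MeasurableSingletonClass L] (hq : Measurable q)
    (hd : ∀ l, (μ l : Measure K).map q = Measure.dirac l)
    (hinv : ∀ (g : G) (l : L), (μ l : Measure K).map (fun x => g • x) = μ (g • l)) :
    transitionSet G q ⊆ invariantFiberMaps q μ := by
  rintro θ ⟨g, hrng, hθ⟩ f
  rw [fiberIntegral_eq_integral hq hd (F := fun x => f (g • x)) fun x => by rw [hθ], hrng,
    ← hinv, integral_map (continuous_const_smul g).aemeasurable
      f.continuous.measurable.aestronglyMeasurable]

lemma isSubsemigroupoid_invariantFiberMaps [NormalSpace K] [OpensMeasurableSpace K]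
    [TopologicalSpace L] [T1Space L] [BorelSpace L] (hq : Continuous q)
    (hd : ∀ l, (μ l : Measure K).map q = Measure.dirac l) :
    IsSubsemigroupoid (invariantFiberMaps q μ) := by
  intro θ hθ η hη h f
  obtain ⟨F, hF⟩ := ContinuousMap.exists_extension_of_fiber hq
    (g := fun y => f (η.toFun y)) (f.continuous.comp η.continuous_toFun)
  calc fiberIntegral μ f (η.comp θ h)
      = fiberIntegral μ F θ := by
        refine integral_congr_ae (Eventually.of_forall fun x => ?_)
        exact (hF ⟨θ.toFun x, (θ.maps_to x).trans h⟩).symm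
    _ = ∫ x, F x ∂(μ θ.rng : Measure K) := hθ F
    _ = fiberIntegral μ f η := by rw [h, fiberIntegral_eq_integral hq.measurable hd hF]
    _ = ∫ x, f x ∂(μ η.rng : Measure K) := hη f

lemma isClosed_invariantFiberMaps [CompactSpace K] [T2Space K] [OpensMeasurableSpace K]
    [TopologicalSpace L] [T2Space L] [BorelSpace L] (hq : Continuous q) (hqs : Surjective q)
    (hμ : Continuous μ) (hd : ∀ l, (μ l : Measure K).map q = Measure.dirac l) :
    IsClosed (invariantFiberMaps q μ) := by
  simp only [invariantFiberMaps, ofPred_forall]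
  exact isClosed_iInter fun f =>
    isClosed_eq (continuous_fiberIntegral hq hqs hμ hd f.continuous)
    ((ProbabilityMeasure.continuous_integral_complex f).comp (hμ.comp (continuous_rng hq hqs)))

end Invariance

end FiberMap

theorem statement14_general {G K L : Type} [Group G] [TopologicalSpace G]
    [TopologicalSpace K] [CompactSpace K] [T2Space K]
    [MeasurableSpace K] [BorelSpace K]
    [TopologicalSpace L] [T2Space L]
    [MeasurableSpace L] [BorelSpace L]
    [MulAction G K] [ContinuousSMul G K] [MulAction G L]
    (q : K → L) (hq : Continuous q) (hqs : Function.Surjective q)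
    (μ : L → MeasureTheory.ProbabilityMeasure K) (hμ : IsRIM G q μ) :
    ∀ θ ∈ uniformEnveloping G q, ∀ f : ContinuousMap K ℂ,
      (∫ x : {x : K // q x = θ.src}, f (θ.toFun x)
          ∂(MeasureTheory.Measure.comap Subtype.val (μ θ.src : MeasureTheory.Measure K)))
        = ∫ x : K, f x ∂(μ θ.rng : MeasureTheory.Measure K) := by
  obtain ⟨hμc, -, hd, hinv⟩ := hμ
  intro θ hθ
  exact mem_sInter.mp hθ (FiberMap.invariantFiberMaps q μ)
    ⟨FiberMap.transitionSet_subset_invariantFiberMaps G hq.measurable hd hinv,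
      FiberMap.isSubsemigroupoid_invariantFiberMaps hq hd,
      FiberMap.isClosed_invariantFiberMaps hq hqs hμc hd⟩

/-- A relatively invariant measure for an open extension `q : (K,G) → (L,G)` is invariant
under the whole uniform enveloping semigroupoid: for every `θ ∈ E_u(q)` and every
`f ∈ C(K,ℂ)` one has `∫_{K_{s(θ)}} f∘θ dμ_{s(θ)} = ∫_K f dμ_{r(θ)}`, where `μ_{s(θ)}` is
regarded as a measure on the fiber `K_{s(θ)}` via the subspace (comap) measure. -/
theorem statement14 {G K L : Type} [Group G] [TopologicalSpace G] [IsTopologicalGroup G]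
    [T2Space G] [TopologicalSpace K] [CompactSpace K] [T2Space K] [Nonempty K]
    [MeasurableSpace K] [BorelSpace K]
    [TopologicalSpace L] [CompactSpace L] [T2Space L] [Nonempty L]
    [MeasurableSpace L] [BorelSpace L]
    [MulAction G K] [ContinuousSMul G K] [MulAction G L] [ContinuousSMul G L]
    (q : K → L) (hq : Continuous q) (hqs : Function.Surjective q) (hqo : IsOpenMap q)
    (heq : ∀ (g : G) (x : K), q (g • x) = g • q x)
    (μ : L → MeasureTheory.ProbabilityMeasure K) (hμ : IsRIM G q μ) :
    ∀ θ ∈ uniformEnveloping G q, ∀ f : ContinuousMap K ℂ,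
      (∫ x : {x : K // q x = θ.src}, f (θ.toFun x)
          ∂(MeasureTheory.Measure.comap Subtype.val (μ θ.src : MeasureTheory.Measure K)))
        = ∫ x : K, f x ∂(μ θ.rng : MeasureTheory.Measure K) :=
  statement14_general q hq hqs μ hμ
end

section
/- Let q : (K,G) → (L,G) be an open extension of topological dynamical systems. Then the Koopman action on C_q(K) is continuous: the map G × C_q(K) → C_q(K) which sends (g, f) with f ∈ C(K_l, ℂ) to the function T_g f ∈ C(K_{g·l}, ℂ) defined by (T_g f)(x) = f(g⁻¹·x), is continuous with respect to the product of the topology of G and the compact-open topology on C_q(K). -/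
open Filter Topology Set Function MeasureTheory

/-- The Koopman operator: for `g ∈ G` and `f ∈ C(K_l, ℂ)`, the function
`T_g f ∈ C(K_{g•l}, ℂ)` given by `(T_g f)(x) = f(g⁻¹ • x)`. -/
noncomputable def koopman {G K L : Type} [Group G] [TopologicalSpace K] [MulAction G K]
    [ContinuousConstSMul G K] [MulAction G L] (q : K → L)
    (heq : ∀ (g : G) (x : K), q (g • x) = g • q x) (g : G)
    (f : FiberMap q (fun _ : ℂ => ())) : FiberMap q (fun _ : ℂ => ()) where
  src := g • f.src
  rng := ()
  toFun x := f.toFun ⟨g⁻¹ • (x : K), by rw [heq, x.2, inv_smul_smul]⟩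
  maps_to _ := rfl
  continuous_toFun := f.continuous_toFun.comp
    (((continuous_const_smul g⁻¹).comp continuous_subtype_val).subtype_mk
      (fun x => by show q (g⁻¹ • (x : K)) = f.src; rw [heq, x.2, inv_smul_smul]))

/- `T_g f ∈ W(C, O)` says that `g⁻¹C` lies in the open set `f⁻¹(O) ∪ (K \ K_{s(f)})`
(open because fibres are closed). Squeeze a compact neighbourhood `D` of `g₀⁻¹C` into that set
for `f₀`; by the tube lemma `g⁻¹C ⊆ D` for `g` near `g₀`, and `W(D, O)` is a neighbourhood of `f₀`. -/

namespace FiberMap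

variable {X L Y L' : Type} [TopologicalSpace X] [TopologicalSpace Y] {p : X → L} {q : Y → L'}

/-- `θ⁻¹(O)` together with every point off the source fibre, so that `θ ∈ W(C, O)` iff
`C ⊆ θ.extPreimage O`. -/
def extPreimage (θ : FiberMap p q) (O : Set Y) : Set X :=
  {x | ∀ h : p x = θ.src, θ.toFun ⟨x, h⟩ ∈ O}

theorem setOf_subset_extPreimage (C : Set X) (O : Set Y) :
    {θ : FiberMap p q | C ⊆ θ.extPreimage O} =
      {θ | ∀ x : {x : X // p x = θ.src}, (x : X) ∈ C → θ.toFun x ∈ O} := by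
  ext θ
  exact ⟨fun h x hx => h hx x.2, fun h x hx hpx => h ⟨x, hpx⟩ hx⟩

theorem isOpen_setOf_subset_extPreimage {C : Set X} {O : Set Y} (hC : IsCompact C)
    (hO : IsOpen O) : IsOpen {θ : FiberMap p q | C ⊆ θ.extPreimage O} :=
  TopologicalSpace.isOpen_generateFrom_of_mem ⟨C, O, hC, hO, setOf_subset_extPreimage C O⟩

theorem isOpen_extPreimage [TopologicalSpace L] [T1Space L] (hp : Continuous p)
    (θ : FiberMap p q) {O : Set Y} (hO : IsOpen O) : IsOpen (θ.extPreimage O) := by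
  obtain ⟨V, hV, hVθ⟩ := isOpen_induced_iff.1 (hO.preimage θ.continuous_toFun)
  have hθ : θ.extPreimage O = (p ⁻¹' {θ.src})ᶜ ∪ V := by
    ext x
    by_cases hpx : p x = θ.src
    · have hxV : x ∈ V ↔ θ.toFun ⟨x, hpx⟩ ∈ O := Set.ext_iff.1 hVθ ⟨x, hpx⟩
      simp [extPreimage, hpx, hxV]
    · simp [extPreimage, hpx]
  rw [hθ]
  exact (isClosed_singleton.preimage hp).isOpen_compl.union hV

end FiberMap

open FiberMap

section Koopman

variable {G K L : Type} [Group G] [TopologicalSpace K] [MulAction G K] [ContinuousConstSMul G K]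
  [MulAction G L] {q : K → L} (heq : ∀ (g : G) (x : K), q (g • x) = g • q x)

theorem mem_extPreimage_koopman {g : G} {f : FiberMap q (fun _ : ℂ => ())} {O : Set ℂ} {x : K} :
    x ∈ (koopman q heq g f).extPreimage O ↔ g⁻¹ • x ∈ f.extPreimage O := by
  have hfib : q x = g • f.src ↔ q (g⁻¹ • x) = f.src := by rw [heq, inv_smul_eq_iff]
  exact ⟨fun h hpx => h (hfib.2 hpx), fun h hpx => h (hfib.1 hpx)⟩

theorem isOpen_setOf_subset_extPreimage_koopman [TopologicalSpace G] [ContinuousInv G]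
    [ContinuousSMul G K] [LocallyCompactSpace K] [TopologicalSpace L] [T1Space L]
    (hq : Continuous q) {C : Set K} {O : Set ℂ} (hC : IsCompact C) (hO : IsOpen O) :
    IsOpen {z : G × FiberMap q (fun _ : ℂ => ()) |
      C ⊆ (koopman q heq z.1 z.2).extPreimage O} := by
  refine isOpen_iff_mem_nhds.2 fun ⟨g₀, f₀⟩ h₀ => ?_
  have hC₀ : (g₀⁻¹ • ·) '' C ⊆ f₀.extPreimage O := by
    rintro _ ⟨x, hx, rfl⟩
    exact (mem_extPreimage_koopman heq).1 (h₀ hx)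
  obtain ⟨D, hD, hCD, hDf₀⟩ := exists_compact_between (hC.image (continuous_const_smul _))
    (f₀.isOpen_extPreimage hq hO) hC₀
  have hg : ∀ᶠ g in 𝓝 g₀, ∀ x ∈ C, g⁻¹ • x ∈ interior D :=
    hC.eventually_forall_of_forall_eventually fun x hx =>
      (continuous_fst.inv.smul continuous_snd).continuousAt.preimage_mem_nhds
        (isOpen_interior.mem_nhds (hCD ⟨x, hx, rfl⟩))
  have hf : ∀ᶠ f in 𝓝 f₀, D ⊆ f.extPreimage O :=
    (isOpen_setOf_subset_extPreimage hD hO).mem_nhds hDf₀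
  filter_upwards [prod_mem_nhds hg hf] with ⟨g, f⟩ ⟨hgC, hfD⟩ x hx
  exact (mem_extPreimage_koopman heq).2 (hfD (interior_subset (hgC x hx)))

end Koopman

theorem statement16_general {G K L : Type} [Group G] [TopologicalSpace G] [IsTopologicalGroup G]
    [TopologicalSpace K] [CompactSpace K] [T2Space K]
    [TopologicalSpace L] [T2Space L]
    [MulAction G K] [ContinuousSMul G K] [MulAction G L]
    (q : K → L) (hq : Continuous q)
    (heq : ∀ (g : G) (x : K), q (g • x) = g • q x) :
    Continuous (fun z : G × FiberMap q (fun _ : ℂ => ()) =>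
      koopman q heq z.1 z.2) := by
  refine continuous_generateFrom_iff.2 ?_
  rintro _ ⟨C, O, hC, hO, rfl⟩
  rw [← setOf_subset_extPreimage]
  exact isOpen_setOf_subset_extPreimage_koopman heq hq hC hO

/-- The Koopman action of `G` on `C_q(K)` is jointly continuous with respect to the
compact-open topology. -/
theorem statement16 {G K L : Type} [Group G] [TopologicalSpace G] [IsTopologicalGroup G]
    [T2Space G] [TopologicalSpace K] [CompactSpace K] [T2Space K] [Nonempty K]
    [TopologicalSpace L] [CompactSpace L] [T2Space L] [Nonempty L]
    [MulAction G K] [ContinuousSMul G K] [MulAction G L] [ContinuousSMul G L]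
    (q : K → L) (hq : Continuous q) (hqs : Function.Surjective q) (hqo : IsOpenMap q)
    (heq : ∀ (g : G) (x : K), q (g • x) = g • q x) :
    Continuous (fun z : G × FiberMap q (fun _ : ℂ => ()) =>
      koopman q heq z.1 z.2) :=
  statement16_general q hq heq
end

section
/- Let q : K → L be an open continuous surjection between compact Hausdorff spaces and let Θ ⊆ C_q^q(K,K) be a compact set (in the compact-open topology) that is closed under composition of composable elements and such that every θ ∈ Θ is a homeomorphism of K_{s(θ)} onto K_{r(θ)} whose inverse belongs to Θ, and assume Θ is transitive: for all l, l' ∈ L there exists θ ∈ Θ with s(θ) = l and r(θ) = l'. Then the maps (s,r) : Θ → L × L, s : Θ → L and r : Θ → L are open, and so is the restriction of s to the isotropy bundle Iso(Θ) = {θ ∈ Θ : s(θ) = r(θ)}. -/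
open Filter Topology Set Function MeasureTheory

section Aux
variable {K L : Type} [TopologicalSpace K] [TopologicalSpace L] {q : K → L}

theorem FiberMap.ext' {a b : FiberMap q q} (hs : a.src = b.src) (hr : a.rng = b.rng)
    (h : ∀ (x : K) (hx : q x = a.src) (hx' : q x = b.src),
      a.toFun ⟨x, hx⟩ = b.toFun ⟨x, hx'⟩) : a = b := by
  obtain ⟨s₁, r₁, f₁, m₁, c₁⟩ := a
  obtain ⟨s₂, r₂, f₂, m₂, c₂⟩ := b
  dsimp at hs hr h
  subst hs; subst hr
  have : f₁ = f₂ := by funext x; obtain ⟨x, hx⟩ := x; exact h x hx hx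
  subst this
  rfl

/-- The subbasic sets of the compact-open topology. -/
def Wset (C O : Set K) : Set (FiberMap q q) :=
  {θ | ∀ x : {x : K // q x = θ.src}, (x : K) ∈ C → θ.toFun x ∈ O}

theorem isOpen_Wset {C O : Set K} (hC : IsCompact C) (hO : IsOpen O) :
    IsOpen (Wset (q := q) C O) :=
  TopologicalSpace.GenerateOpen.basic _ ⟨C, O, hC, hO, rfl⟩

theorem continuous_src [CompactSpace K] [T2Space K] (hq : Continuous q)
    (hqs : Function.Surjective q) : Continuous (fun θ : FiberMap q q => θ.src) := by
  rw [continuous_def]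
  intro V hV
  have : (fun θ : FiberMap q q => θ.src) ⁻¹' V = Wset (q ⁻¹' Vᶜ) (∅ : Set K) := by
    ext θ
    constructor
    · intro hθ x hxC
      exact absurd (show q (x : K) ∈ V from x.2.symm ▸ hθ) hxC
    · intro hθ
      by_contra hsrc
      obtain ⟨x, hx⟩ := hqs θ.src
      exact hθ ⟨x, hx⟩ (by simp only [mem_preimage, mem_compl_iff, hx]; exact hsrc)
  rw [this]
  exact isOpen_Wset ((hV.isClosed_compl.preimage hq).isCompact) isOpen_empty


theorem continuous_rng [CompactSpace K] (hq : Continuous q)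
    (hqs : Function.Surjective q) : Continuous (fun θ : FiberMap q q => θ.rng) := by
  rw [continuous_def]
  intro V hV
  have : (fun θ : FiberMap q q => θ.rng) ⁻¹' V = Wset (univ : Set K) (q ⁻¹' V) := by
    ext θ
    constructor
    · intro hθ x _
      show q (θ.toFun x) ∈ V
      rw [θ.maps_to x]; exact hθ
    · intro hθ
      obtain ⟨x, hx⟩ := hqs θ.src
      have := hθ ⟨x, hx⟩ (mem_univ x)
      rwa [mem_preimage, θ.maps_to] at this
  rw [this]
  exact isOpen_Wset isCompact_univ (hV.preimage hq)

open scoped Classical in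
noncomputable def FiberMap.compApp (χ ξ : FiberMap q q) : FiberMap q q :=
  if h : ξ.rng = χ.src then χ.comp ξ h else ξ

theorem FiberMap.compApp_eq (χ ξ : FiberMap q q) (h : ξ.rng = χ.src) :
    χ.compApp ξ = χ.comp ξ h := by rw [FiberMap.compApp, dif_pos h]

theorem compApp_continuousOn [CompactSpace K] [T2Space K] [T2Space L] (hq : Continuous q) :
    ContinuousOn (fun p : FiberMap q q × FiberMap q q => p.1.compApp p.2)
      {p | p.2.rng = p.1.src} := by
  rintro ⟨χ₀, ξ₀⟩ h₀
  replace h₀ : ξ₀.rng = χ₀.src := h₀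
  have key : Tendsto (fun p : FiberMap q q × FiberMap q q => p.1.compApp p.2)
      (𝓝[{p : FiberMap q q × FiberMap q q | p.2.rng = p.1.src}] (χ₀, ξ₀))
      (@nhds _ (fiberCO q q) ((χ₀, ξ₀).1.compApp (χ₀, ξ₀).2)) := by
    rw [fiberCO, TopologicalSpace.tendsto_nhds_generateFrom_iff]
    rintro W ⟨C, O, hC, hO, rfl⟩ hmem
    rw [FiberMap.compApp_eq χ₀ ξ₀ h₀] at hmem
    -- hmem : ∀ x in C ∩ fiber(ξ₀.src), χ₀ (ξ₀ x) ∈ O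
    -- the compact image
    set D : Set K := ξ₀.toFun '' (Subtype.val ⁻¹' C) with hD
    have hfibC : CompactSpace {x : K // q x = ξ₀.src} :=
      isCompact_iff_compactSpace.mp
        ((isClosed_eq hq continuous_const).isCompact)
    have hDc : IsCompact D := ((hC.isClosed.preimage continuous_subtype_val).isCompact).image
      ξ₀.continuous_toFun
    -- the open set O'' in K pulling back to χ₀⁻¹ O
    obtain ⟨O'', hO'', hOT⟩ := isOpen_induced_iff.mp
      (hO.preimage χ₀.continuous_toFun : IsOpen (χ₀.toFun ⁻¹' O))
    have hDO : D ⊆ O'' := by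
      rintro y ⟨x, hxC, rfl⟩
      have hy : q (ξ₀.toFun x) = χ₀.src := (ξ₀.maps_to x).trans h₀
      have : (⟨ξ₀.toFun x, hy⟩ : {x : K // q x = χ₀.src}) ∈ χ₀.toFun ⁻¹' O := hmem x hxC
      rw [← hOT] at this
      exact this
    obtain ⟨Vo, hVo, hDV, hVO⟩ := normal_exists_closure_subset hDc.isClosed hO'' hDO
    have hN1 : χ₀ ∈ Wset (closure Vo) O := by
      intro y hy
      have : (y : K) ∈ O'' := hVO hy
      have : y ∈ χ₀.toFun ⁻¹' O := by rw [← hOT]; exact this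
      exact this
    have hN2 : ξ₀ ∈ Wset C Vo := fun x hx => hDV ⟨x, hx, rfl⟩
    refine mem_nhdsWithin.mpr ⟨Wset (closure Vo) O ×ˢ Wset C Vo,
      (isOpen_Wset isClosed_closure.isCompact hO).prod (isOpen_Wset hC hVo),
      ⟨hN1, hN2⟩, ?_⟩
    rintro ⟨χ, ξ⟩ ⟨⟨hχ, hξ⟩, (hcomp : ξ.rng = χ.src)⟩
    simp only [mem_preimage, FiberMap.compApp_eq χ ξ hcomp]
    show χ.comp ξ hcomp ∈ {θ : FiberMap q q | ∀ x : {x : K // q x = θ.src}, (x : K) ∈ C → θ.toFun x ∈ O}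
    intro x hx
    exact hχ ⟨ξ.toFun ⟨(x : K), x.2⟩, (ξ.maps_to _).trans hcomp⟩
      (subset_closure (hξ ⟨(x : K), x.2⟩ hx))
  exact key


theorem FiberMap.toFun_congr (θ : FiberMap q q) {a b : {x : K // q x = θ.src}}
    (h : (a : K) = (b : K)) : θ.toFun a = θ.toFun b := congrArg _ (Subtype.ext h)

theorem master [CompactSpace K] [T2Space K] [CompactSpace L] [T2Space L]
    (hq : Continuous q) (hqs : Function.Surjective q)
    {Θ : Set (FiberMap q q)} (hΘc : IsCompact Θ)
    (hΘcomp : ∀ θ ∈ Θ, ∀ η ∈ Θ, ∀ h : θ.rng = η.src, FiberMap.comp η θ h ∈ Θ)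
    (hΘinv : ∀ θ ∈ Θ, ∃ η ∈ Θ, ∃ (hs : η.src = θ.rng) (hr : η.rng = θ.src),
      (∀ x : {x : K // q x = θ.src},
        η.toFun ⟨θ.toFun x, (θ.maps_to x).trans hs.symm⟩ = (x : K)) ∧
      (∀ y : {y : K // q y = η.src},
        θ.toFun ⟨η.toFun y, (η.maps_to y).trans hr⟩ = (y : K)))
    {θ₀ : FiberMap q q} (hθ₀ : θ₀ ∈ Θ) {V : Set (FiberMap q q)} (hV : IsOpen V)
    (hθV : θ₀ ∈ V) {α : Type} (U : Ultrafilter α) (f g : α → FiberMap q q)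
    (hfΘ : ∀ p, f p ∈ Θ) (hgΘ : ∀ p, g p ∈ Θ)
    (hgr : ∀ p, (g p).rng = θ₀.src) (hfs : ∀ p, (f p).src = θ₀.rng)
    (hgs : Tendsto (fun p => (g p).src) ↑U (𝓝 θ₀.src))
    (hfr : Tendsto (fun p => (f p).rng) ↑U (𝓝 θ₀.rng)) :
    ∀ᶠ p in ↑U, ∃ ψ ∈ Θ, ψ ∈ V ∧ ψ.src = (g p).src ∧ ψ.rng = (f p).rng := by
  classical
  -- limit of the pair of selections
  have hprod : Θ ×ˢ Θ ∈ Ultrafilter.map (fun p => (f p, g p)) U :=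
    Ultrafilter.mem_map.mpr (univ_mem' fun p => ⟨hfΘ p, hgΘ p⟩)
  obtain ⟨⟨ζ, η⟩, ⟨hζΘ, hηΘ⟩, hle⟩ :=
    (hΘc.prod hΘc).ultrafilter_le_nhds (Ultrafilter.map (fun p => (f p, g p)) U)
      (le_principal_iff.mpr hprod)
  have hT : Tendsto (fun p => (f p, g p)) ↑U (𝓝 (ζ, η)) := by
    rw [Ultrafilter.coe_map] at hle; exact hle
  have hTf : Tendsto f ↑U (𝓝 ζ) := (continuous_fst.tendsto _).comp hT
  have hTg : Tendsto g ↑U (𝓝 η) := (continuous_snd.tendsto _).comp hT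
  -- identification of sources and ranges of the limits
  have hηs : η.src = θ₀.src :=
    tendsto_nhds_unique (((continuous_src hq hqs).tendsto η).comp hTg) hgs
  have hηr : η.rng = θ₀.src := by
    refine tendsto_nhds_unique (((continuous_rng hq hqs).tendsto η).comp hTg) ?_
    exact tendsto_const_nhds.congr (fun p => (hgr p).symm)
  have hζr : ζ.rng = θ₀.rng :=
    tendsto_nhds_unique (((continuous_rng hq hqs).tendsto ζ).comp hTf) hfr
  have hζs : ζ.src = θ₀.rng := by
    refine tendsto_nhds_unique (((continuous_src hq hqs).tendsto ζ).comp hTf) ?_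
    exact tendsto_const_nhds.congr (fun p => (hfs p).symm)
  -- inverses of the limits
  obtain ⟨η', hη'Θ, hη's, hη'r, hηid, -⟩ := hΘinv η hηΘ
  obtain ⟨ζ', hζ'Θ, hζ's, hζ'r, -, hζid⟩ := hΘinv ζ hζΘ
  -- the correcting middle map κ
  have hc1 : η'.rng = θ₀.src := hη'r.trans hηs
  have hc2 : (θ₀.comp η' hc1).rng = ζ'.src := by
    show θ₀.rng = ζ'.src; rw [hζ's, hζr]
  set κ : FiberMap q q := ζ'.comp (θ₀.comp η' hc1) hc2 with hκdef
  have hκΘ : κ ∈ Θ := hΘcomp _ (hΘcomp η' hη'Θ θ₀ hθ₀ hc1) _ hζ'Θ hc2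
  have hκs : κ.src = θ₀.src := by show η'.src = θ₀.src; rw [hη's, hηr]
  have hκr : κ.rng = θ₀.rng := by show ζ'.rng = θ₀.rng; rw [hζ'r, hζs]
  have hS1 : ∀ p, (g p).rng = κ.src := fun p => (hgr p).trans hκs.symm
  have hηκ : η.rng = κ.src := hηr.trans hκs.symm
  -- inner composition tendsto
  have hinner : Tendsto (fun p => κ.compApp (g p)) ↑U (𝓝 (κ.compApp η)) := by
    have hcont : ContinuousOn (fun ξ : FiberMap q q => κ.compApp ξ)
        {ξ : FiberMap q q | ξ.rng = κ.src} :=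
      (compApp_continuousOn hq).comp
        (Continuous.continuousOn (continuous_const.prodMk continuous_id))
        (fun ξ hξ => hξ)
    have hwithin : Tendsto g ↑U (𝓝[{ξ : FiberMap q q | ξ.rng = κ.src}] η) := by
      rw [nhdsWithin, tendsto_inf]
      exact ⟨hTg, tendsto_principal.mpr (Eventually.of_forall hS1)⟩
    exact Filter.Tendsto.comp (hcont η hηκ) hwithin
  -- outer composition tendsto
  have hmemS : ∀ p, (κ.compApp (g p)).rng = (f p).src := by
    intro p
    rw [FiberMap.compApp_eq κ (g p) (hS1 p)]
    show κ.rng = (f p).src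
    rw [hκr, hfs p]
  have hκη : (κ.compApp η).rng = ζ.src := by
    rw [FiberMap.compApp_eq κ η hηκ]
    show κ.rng = ζ.src
    rw [hκr, hζs]
  have houter : Tendsto (fun p => (f p).compApp (κ.compApp (g p))) ↑U
      (𝓝 (ζ.compApp (κ.compApp η))) := by
    have hpair : Tendsto (fun p => (f p, κ.compApp (g p))) ↑U (𝓝 (ζ, κ.compApp η)) :=
      hTf.prodMk_nhds hinner
    have hwithin : Tendsto (fun p => (f p, κ.compApp (g p))) ↑U
        (𝓝[{p : FiberMap q q × FiberMap q q | p.2.rng = p.1.src}] (ζ, κ.compApp η)) := by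
      rw [nhdsWithin, tendsto_inf]
      exact ⟨hpair, tendsto_principal.mpr (Eventually.of_forall hmemS)⟩
    exact Filter.Tendsto.comp (compApp_continuousOn hq (ζ, κ.compApp η) hκη) hwithin
  -- the limit equals θ₀
  have hκηζ : (κ.comp η hηκ).rng = ζ.src := by show κ.rng = ζ.src; rw [hκr, hζs]
  have hfinal : ζ.compApp (κ.compApp η) = θ₀ := by
    rw [FiberMap.compApp_eq κ η hηκ, FiberMap.compApp_eq ζ _ hκηζ]
    refine FiberMap.ext' ?_ ?_ ?_
    · exact hηs
    · exact hζr
    intro x hx hx'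
    have e1 : (η'.toFun ⟨η.toFun ⟨x, hx⟩, (η.maps_to ⟨x, hx⟩).trans hηκ⟩ : K) = x :=
      hηid ⟨x, hx⟩
    have e2 : θ₀.toFun ⟨η'.toFun ⟨η.toFun ⟨x, hx⟩, (η.maps_to ⟨x, hx⟩).trans hηκ⟩,
        (η'.maps_to _).trans hc1⟩ = θ₀.toFun ⟨x, hx'⟩ :=
      FiberMap.toFun_congr θ₀ e1
    have e4 : ζ.toFun ⟨ζ'.toFun ⟨θ₀.toFun ⟨x, hx'⟩, hc2 ▸ θ₀.maps_to ⟨x, hx'⟩⟩,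
        (ζ'.maps_to _).trans hζ'r⟩ = θ₀.toFun ⟨x, hx'⟩ :=
      hζid ⟨θ₀.toFun ⟨x, hx'⟩, hc2 ▸ θ₀.maps_to ⟨x, hx'⟩⟩
    exact (FiberMap.toFun_congr ζ (FiberMap.toFun_congr ζ' e2)).trans e4
  -- conclusion
  have hT2 : Tendsto (fun p => (f p).compApp (κ.compApp (g p))) ↑U (𝓝 θ₀) := by
    rwa [hfinal] at houter
  have hev : ∀ᶠ p in ↑U, (f p).compApp (κ.compApp (g p)) ∈ V :=
    hT2 (hV.mem_nhds hθV)
  filter_upwards [hev] with p hp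
  refine ⟨(f p).compApp (κ.compApp (g p)), ?_, hp, ?_, ?_⟩
  · rw [FiberMap.compApp_eq κ (g p) (hS1 p),
      FiberMap.compApp_eq (f p) _ (by rw [← FiberMap.compApp_eq κ (g p) (hS1 p)]; exact hmemS p)]
    exact hΘcomp _ (hΘcomp (g p) (hgΘ p) κ hκΘ (hS1 p)) _ (hfΘ p) _
  · rw [FiberMap.compApp_eq κ (g p) (hS1 p),
      FiberMap.compApp_eq (f p) _ (by rw [← FiberMap.compApp_eq κ (g p) (hS1 p)]; exact hmemS p)]
    rfl
  · rw [FiberMap.compApp_eq κ (g p) (hS1 p),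
      FiberMap.compApp_eq (f p) _ (by rw [← FiberMap.compApp_eq κ (g p) (hS1 p)]; exact hmemS p)]
    rfl

end Aux

theorem statement19' {K L : Type} [TopologicalSpace K] [CompactSpace K] [T2Space K]
    [Nonempty K] [TopologicalSpace L] [CompactSpace L] [T2Space L] [Nonempty L]
    (q : K → L) (hq : Continuous q) (hqs : Function.Surjective q) (hqo : IsOpenMap q)
    (Θ : Set (FiberMap q q)) (hΘc : IsCompact Θ)
    (hΘcomp : ∀ θ ∈ Θ, ∀ η ∈ Θ, ∀ h : θ.rng = η.src, FiberMap.comp η θ h ∈ Θ)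
    (hΘinv : ∀ θ ∈ Θ, ∃ η ∈ Θ, ∃ (hs : η.src = θ.rng) (hr : η.rng = θ.src),
      (∀ x : {x : K // q x = θ.src},
        η.toFun ⟨θ.toFun x, (θ.maps_to x).trans hs.symm⟩ = (x : K)) ∧
      (∀ y : {y : K // q y = η.src},
        θ.toFun ⟨η.toFun y, (η.maps_to y).trans hr⟩ = (y : K)))
    (hΘtrans : ∀ l l' : L, ∃ θ ∈ Θ, θ.src = l ∧ θ.rng = l') :
    IsOpenMap (fun θ : {θ : FiberMap q q // θ ∈ Θ} => ((θ.1.src, θ.1.rng) : L × L)) ∧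
    IsOpenMap (fun θ : {θ : FiberMap q q // θ ∈ Θ} => θ.1.src) ∧
    IsOpenMap (fun θ : {θ : FiberMap q q // θ ∈ Θ} => θ.1.rng) ∧
    IsOpenMap (fun θ : {θ : FiberMap q q // θ ∈ Θ ∧ θ.src = θ.rng} => θ.1.src) := by
  classical
  -- Claim A: openness of (s, r) at the level of sets of fiber maps
  have keyA : ∀ V : Set (FiberMap q q), IsOpen V → ∀ θ₀ ∈ Θ, θ₀ ∈ V →
      (fun θ : FiberMap q q => (θ.src, θ.rng)) '' (V ∩ Θ) ∈ 𝓝 (θ₀.src, θ₀.rng) := by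
    intro V hV θ₀ hθ₀Θ hθ₀V
    by_contra hcon
    set S := (fun θ : FiberMap q q => (θ.src, θ.rng)) '' (V ∩ Θ) with hS
    have hcl : (θ₀.src, θ₀.rng) ∈ closure Sᶜ := by
      rw [closure_compl, mem_compl_iff]
      exact fun h => hcon (mem_interior_iff_mem_nhds.mp h)
    rw [mem_closure_iff_clusterPt] at hcl
    haveI : (𝓝 (θ₀.src, θ₀.rng) ⊓ 𝓟 Sᶜ).NeBot := hcl
    set U : Ultrafilter (L × L) := Ultrafilter.of (𝓝 (θ₀.src, θ₀.rng) ⊓ 𝓟 Sᶜ) with hU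
    have hUle : ↑U ≤ 𝓝 (θ₀.src, θ₀.rng) ⊓ 𝓟 Sᶜ := Ultrafilter.of_le _
    have hUn : ↑U ≤ 𝓝 (θ₀.src, θ₀.rng) := hUle.trans inf_le_left
    have hUc : Sᶜ ∈ U := hUle (mem_inf_of_right (mem_principal_self Sᶜ))
    choose a haΘ has har using fun l => hΘtrans l θ₀.src
    choose b hbΘ hbs hbr using fun l => hΘtrans θ₀.rng l
    have hev := master hq hqs hΘc hΘcomp hΘinv hθ₀Θ hV hθ₀V U
      (fun p : L × L => b p.2) (fun p : L × L => a p.1)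
      (fun p => hbΘ p.2) (fun p => haΘ p.1) (fun p => har p.1) (fun p => hbs p.2)
      (((continuous_fst.tendsto (θ₀.src, θ₀.rng)).mono_left hUn).congr
        fun p => (has p.1).symm)
      (((continuous_snd.tendsto (θ₀.src, θ₀.rng)).mono_left hUn).congr
        fun p => (hbr p.2).symm)
    obtain ⟨p, ⟨ψ, hψΘ, hψV, hψs, hψr⟩, hpc⟩ := (hev.and hUc).exists
    have hψs' : ψ.src = (a p.1).src := hψs
    have hψr' : ψ.rng = (b p.2).rng := hψr
    refine hpc ⟨ψ, ⟨hψV, hψΘ⟩, ?_⟩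
    show (ψ.src, ψ.rng) = p
    rw [hψs', hψr', has p.1, hbr p.2]
  -- Claim B: openness of s restricted to the isotropy bundle
  have keyB : ∀ V : Set (FiberMap q q), IsOpen V → ∀ θ₀, θ₀ ∈ Θ → θ₀.src = θ₀.rng →
      θ₀ ∈ V → {l : L | ∃ ψ, (ψ ∈ Θ ∧ ψ.src = ψ.rng) ∧ ψ ∈ V ∧ ψ.src = l} ∈ 𝓝 θ₀.src := by
    intro V hV θ₀ hθ₀Θ hiso hθ₀V
    by_contra hcon
    set S := {l : L | ∃ ψ, (ψ ∈ Θ ∧ ψ.src = ψ.rng) ∧ ψ ∈ V ∧ ψ.src = l} with hS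
    have hcl : θ₀.src ∈ closure Sᶜ := by
      rw [closure_compl, mem_compl_iff]
      exact fun h => hcon (mem_interior_iff_mem_nhds.mp h)
    rw [mem_closure_iff_clusterPt] at hcl
    haveI : (𝓝 θ₀.src ⊓ 𝓟 Sᶜ).NeBot := hcl
    set U : Ultrafilter L := Ultrafilter.of (𝓝 θ₀.src ⊓ 𝓟 Sᶜ) with hU
    have hUle : ↑U ≤ 𝓝 θ₀.src ⊓ 𝓟 Sᶜ := Ultrafilter.of_le _
    have hUn : ↑U ≤ 𝓝 θ₀.src := hUle.trans inf_le_left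
    have hUc : Sᶜ ∈ U := hUle (mem_inf_of_right (mem_principal_self Sᶜ))
    choose a haΘ has har using fun l => hΘtrans l θ₀.src
    choose a2 ha2Θ ha2s ha2r _h1 _h2 using fun l => hΘinv (a l) (haΘ l)
    have hev := master hq hqs hΘc hΘcomp hΘinv hθ₀Θ hV hθ₀V U
      (fun l : L => a2 l) (fun l : L => a l)
      (fun l => ha2Θ l) (fun l => haΘ l) (fun l => har l)
      (fun l => by rw [ha2s l, har l, hiso])
      ((tendsto_id.mono_left hUn).congr fun l => (has l).symm)
      (by
        rw [← hiso]
        exact (tendsto_id.mono_left hUn).congr fun l => ((ha2r l).trans (has l)).symm)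
    obtain ⟨l, ⟨ψ, hψΘ, hψV, hψs, hψr⟩, hlc⟩ := (hev.and hUc).exists
    have hψs' : ψ.src = (a l).src := hψs
    have hψr' : ψ.rng = (a2 l).rng := hψr
    refine hlc ⟨ψ, ⟨hψΘ, ?_⟩, hψV, ?_⟩
    · rw [hψs', hψr', has l, ha2r l, has l]
    · rw [hψs', has l]
  -- assemble the four statements
  have h1 : IsOpenMap (fun θ : {θ : FiberMap q q // θ ∈ Θ} => ((θ.1.src, θ.1.rng) : L × L)) := by
    intro Uo hUo
    rw [isOpen_iff_mem_nhds]
    rintro pt ⟨⟨θ₀, hθ₀Θ⟩, hθ₀U, rfl⟩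
    obtain ⟨V, hV, hVU⟩ := isOpen_induced_iff.mp hUo
    have hθ₀V : θ₀ ∈ V := by rw [← hVU] at hθ₀U; exact hθ₀U
    refine mem_of_superset (keyA V hV θ₀ hθ₀Θ hθ₀V) ?_
    rintro x ⟨θ, ⟨hθV, hθΘ⟩, rfl⟩
    exact ⟨⟨θ, hθΘ⟩, by rw [← hVU]; exact hθV, rfl⟩
  have h4 : IsOpenMap (fun θ : {θ : FiberMap q q // θ ∈ Θ ∧ θ.src = θ.rng} => θ.1.src) := by
    intro Uo hUo
    rw [isOpen_iff_mem_nhds]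
    rintro pt ⟨⟨θ₀, hθ₀Θ, hθ₀iso⟩, hθ₀U, rfl⟩
    obtain ⟨V, hV, hVU⟩ := isOpen_induced_iff.mp hUo
    have hθ₀V : θ₀ ∈ V := by rw [← hVU] at hθ₀U; exact hθ₀U
    refine mem_of_superset (keyB V hV θ₀ hθ₀Θ hθ₀iso hθ₀V) ?_
    rintro l ⟨ψ, hψm, hψV, rfl⟩
    exact ⟨⟨ψ, hψm⟩, by rw [← hVU]; exact hψV, rfl⟩
  exact ⟨h1, isOpenMap_fst.comp h1, isOpenMap_snd.comp h1, h4⟩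

/-- For a compact transitive groupoid `Θ` of fiber maps over an open surjection
`q : K → L` of compact Hausdorff spaces, the maps `(s,r)`, `s` and `r` on `Θ` are open,
and so is the restriction of `s` to the isotropy bundle `Iso(Θ) = {θ ∈ Θ : s(θ) = r(θ)}`. -/
theorem statement19 {K L : Type} [TopologicalSpace K] [CompactSpace K] [T2Space K]
    [Nonempty K] [TopologicalSpace L] [CompactSpace L] [T2Space L] [Nonempty L]
    (q : K → L) (hq : Continuous q) (hqs : Function.Surjective q) (hqo : IsOpenMap q)
    (Θ : Set (FiberMap q q)) (hΘc : IsCompact Θ)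
    (hΘcomp : ∀ θ ∈ Θ, ∀ η ∈ Θ, ∀ h : θ.rng = η.src, FiberMap.comp η θ h ∈ Θ)
    (hΘinv : ∀ θ ∈ Θ, ∃ η ∈ Θ, ∃ (hs : η.src = θ.rng) (hr : η.rng = θ.src),
      (∀ x : {x : K // q x = θ.src},
        η.toFun ⟨θ.toFun x, (θ.maps_to x).trans hs.symm⟩ = (x : K)) ∧
      (∀ y : {y : K // q y = η.src},
        θ.toFun ⟨η.toFun y, (η.maps_to y).trans hr⟩ = (y : K)))
    (hΘtrans : ∀ l l' : L, ∃ θ ∈ Θ, θ.src = l ∧ θ.rng = l') :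
    IsOpenMap (fun θ : {θ : FiberMap q q // θ ∈ Θ} => ((θ.1.src, θ.1.rng) : L × L)) ∧
    IsOpenMap (fun θ : {θ : FiberMap q q // θ ∈ Θ} => θ.1.src) ∧
    IsOpenMap (fun θ : {θ : FiberMap q q // θ ∈ Θ} => θ.1.rng) ∧
    IsOpenMap (fun θ : {θ : FiberMap q q // θ ∈ Θ ∧ θ.src = θ.rng} => θ.1.src) := by
  exact statement19' q hq hqs hqo Θ hΘc hΘcomp hΘinv hΘtrans
end
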